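/- arXiv:1907.04562 — 3 statements merged into one kernel-verified Lean document; each statement's English description precedes it below -/
import Mathlib

section
/- An irreducible 2-step nilpotent metric Lie algebra n admits a non-zero Killing 3-form if and only if (1) j(z) is a Lie subalgebra of so(v), and (2) for each z ∈ z the map z' ↦ j⁻¹[j(z), j(z')] is skew-symmetric on z. In this case the space of Killing 3-forms on n is one-dimensional, spanned by j + γ₀ where γ₀(z,z') = 2 j⁻¹[j(z), j(z')]. -/
/-!
Let `a` be an eigenvalue of `B` on `z`. Writing the Killing equation for `(z, z')` and for
`(z', z)` and taking adjoints (each `j z` is skew) gives `j z ∘ j ((B - a) z') = 0` whenever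
`B z = a z`. Hence the eigenspace `z₁ = z ∩ ker (B - a)` and its orthogonal complement
`z₂ = (B - a) z` in `z` satisfy `j(z₁) j(z₂) = 0`, which makes `z₁ ⊕ j(z₁)v` and `z₂ ⊕ j(z₂)v`
orthogonal ideals spanning `n`; irreducibility forces `z₂ = 0`, i.e. `B = a` on `z`. The Killing
equation then reads `j(γ(z,z')) = 2a [j z, j z']`, from which (1) and (2) follow when `a ≠ 0`;
conversely, under (1) and (2), `B = id` and `γ₀ = 2 j⁻¹[j ·, j ·]` solve it.
-/

open scoped RealInnerProductSpace

theorem mul_sub_smul_eq_zero_of_star_eq_neg {A : Type*} [Ring A] [StarRing A] [Algebra ℝ A]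
    [StarModule ℝ A] {J P Q G : A} {a : ℝ} (hJ : star J = -J) (hP : star P = -P)
    (hQ : star Q = -Q) (hG : star G = -G)
    (h₁ : (a • J) * P - Q * J + (J * Q - Q * J) = G)
    (h₂ : Q * J - (a • J) * P + (P * (a • J) - (a • J) * P) = -G) :
    J * (Q - a • P) = 0 := by
  have h₁' := congrArg star h₁
  simp only [star_sub, star_add, star_mul, star_smul, hJ, hP, hQ, hG, star_trivial,
    mul_neg, neg_mul, smul_neg, smul_mul_assoc, mul_smul_comm] at h₁' h₂
  rw [mul_sub, mul_smul_comm]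
  linear_combination (norm := module) (2 : ℝ)⁻¹ • (h₂ - h₁')

section SymmetricOn

variable {E : Type*} [NormedAddCommGroup E] [InnerProductSpace ℝ E] {Z : Submodule ℝ E}
  {T : E →ₗ[ℝ] E}

theorem exists_mem_ne_zero_apply_eq_smul [FiniteDimensional ℝ E] (hZ : Z ≠ ⊥)
    (hTZ : ∀ z ∈ Z, T z ∈ Z) (hT : ∀ z ∈ Z, ∀ z' ∈ Z, ⟪T z, z'⟫ = ⟪z, T z'⟫) :
    ∃ a : ℝ, ∃ z ∈ Z, z ≠ 0 ∧ T z = a • z := by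
  have : Nontrivial Z := Submodule.nontrivial_iff_ne_bot.2 hZ
  have hsymm : (T.restrict hTZ).IsSymmetric := fun u v => hT u u.2 v v.2
  obtain ⟨v, hv⟩ := hsymm.hasEigenvalue_iSup_of_finiteDimensional.exists_hasEigenvector
  exact ⟨_, v, v.2, by simpa using hv.2, congrArg Subtype.val hv.apply_eq_smul⟩

theorem inf_ker_sup_map_eq [FiniteDimensional ℝ E] (hTZ : ∀ z ∈ Z, T z ∈ Z)
    (hT : ∀ z ∈ Z, ∀ z' ∈ Z, ⟪T z, z'⟫ = ⟪z, T z'⟫) :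
    Z ⊓ LinearMap.ker T ⊔ Z.map T = Z := by
  refine le_antisymm (sup_le inf_le_left (Submodule.map_le_iff_le_comap.2 hTZ)) fun x hx => ?_
  obtain ⟨y, ⟨z', hz', rfl⟩, w, hw, rfl⟩ := (Z.map T).exists_add_mem_mem_orthogonal x
  have hwZ : w ∈ Z := by simpa using Z.sub_mem hx (hTZ z' hz')
  have hTw : T w = 0 := by
    refine (inner_self_eq_zero (𝕜 := ℝ)).1 ?_
    rw [hT w hwZ _ (hTZ w hwZ)]
    exact Submodule.inner_left_of_mem_orthogonal (Submodule.mem_map_of_mem (hTZ w hwZ)) hw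
  exact add_mem (Submodule.mem_sup_right (Submodule.mem_map_of_mem hz'))
    (Submodule.mem_sup_left ⟨hwZ, hTw⟩)

theorem inf_ker_isOrtho_map (hT : ∀ z ∈ Z, ∀ z' ∈ Z, ⟪T z, z'⟫ = ⟪z, T z'⟫) :
    Z ⊓ LinearMap.ker T ⟂ Z.map T := by
  rw [Submodule.isOrtho_iff_inner_eq]
  rintro z ⟨hz, hTz⟩ _ ⟨z', hz', rfl⟩
  rw [← hT z hz z' hz', LinearMap.mem_ker.1 hTz, inner_zero_left]

end SymmetricOn

theorem Submodule.mem_of_mem_sup_of_mem_orthogonal {𝕜 E : Type*} [RCLike 𝕜]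
    [NormedAddCommGroup E] [InnerProductSpace 𝕜 E] {U V : Submodule 𝕜 E} (h : U ⟂ V) {x : E}
    (hx : x ∈ U ⊔ V) (hxV : x ∈ Vᗮ) : x ∈ U := by
  obtain ⟨u, hu, v, hv, rfl⟩ := Submodule.mem_sup.1 hx
  have hv0 : v = 0 := by
    have := Submodule.inner_right_of_mem_orthogonal hv hxV
    rwa [inner_add_right, h.symm.inner_eq hv hu, zero_add, inner_self_eq_zero] at this
  simpa [hv0] using hu

namespace TwoStepNilpotent

variable {n : Type*} [NormedAddCommGroup n] [InnerProductSpace ℝ n]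

def IsIrreducible (l : n →ₗ[ℝ] n →ₗ[ℝ] n) : Prop :=
  ∀ N' N'' : Submodule ℝ n,
    (∀ x ∈ N', ∀ y : n, l x y ∈ N') → (∀ x ∈ N'', ∀ y : n, l x y ∈ N'') →
    (∀ x ∈ N', ∀ y ∈ N'', ⟪x, y⟫ = 0) → N' ⊔ N'' = ⊤ → N' = ⊥ ∨ N'' = ⊥

def KillingEquation (j : n →ₗ[ℝ] n →ₗ[ℝ] n) (Z : Submodule ℝ n) (B : n →ₗ[ℝ] n)
    (γ : n →ₗ[ℝ] n →ₗ[ℝ] n) : Prop :=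
  ∀ z ∈ Z, ∀ z' ∈ Z,
    j (B z) ∘ₗ j z' - j (B z') ∘ₗ j z + (j z ∘ₗ j (B z') - j (B z') ∘ₗ j z) = j (γ z z')

def BracketClosed (j : n →ₗ[ℝ] n →ₗ[ℝ] n) (Z : Submodule ℝ n) : Prop :=
  ∀ z ∈ Z, ∀ z' ∈ Z, ∃ w ∈ Z, j z ∘ₗ j z' - j z' ∘ₗ j z = j w

def BracketSkew (j : n →ₗ[ℝ] n →ₗ[ℝ] n) (Z : Submodule ℝ n) : Prop :=
  ∀ z ∈ Z, ∀ z' ∈ Z, ∀ z'' ∈ Z, ∀ w ∈ Z, ∀ w' ∈ Z,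
    j z ∘ₗ j z' - j z' ∘ₗ j z = j w → j z ∘ₗ j z'' - j z'' ∘ₗ j z = j w' →
    ⟪w, z''⟫ + ⟪z', w'⟫ = 0

theorem exists_linearMap_coe_eq {l : n →ₗ[ℝ] n →ₗ[ℝ] n} {j : n → n →ₗ[ℝ] n}
    (hj : ∀ z x y, ⟪j z x, y⟫ = ⟪z, l x y⟫) : ∃ J : n →ₗ[ℝ] n →ₗ[ℝ] n, ⇑J = j := by
  refine ⟨{ toFun := j, map_add' := fun z w => ?_, map_smul' := fun a z => ?_ }, rfl⟩ <;>
    ext x <;> refine ext_inner_right ℝ fun y => ?_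
  · simp only [LinearMap.add_apply, inner_add_left, hj]
  · simp only [LinearMap.smul_apply, RingHom.id_apply, real_inner_smul_left, hj]

variable {l j : n →ₗ[ℝ] n →ₗ[ℝ] n} {Z : Submodule ℝ n}

theorem inner_apply_eq_neg_inner (hl : l.IsAlt) (hj : ∀ z x y, ⟪j z x, y⟫ = ⟪z, l x y⟫)
    (z x y : n) : ⟪j z x, y⟫ = -⟪x, j z y⟫ := by
  rw [hj, real_inner_comm _ x, hj, ← hl.neg, inner_neg_right]

theorem star_apply_eq_neg [FiniteDimensional ℝ n] (hl : l.IsAlt)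
    (hj : ∀ z x y, ⟪j z x, y⟫ = ⟪z, l x y⟫) (z : n) : star (j z) = -j z := by
  rw [LinearMap.star_eq_adjoint, eq_comm, LinearMap.eq_adjoint_iff]
  intro x y
  rw [LinearMap.neg_apply, inner_neg_left, inner_apply_eq_neg_inner hl hj, neg_neg]

theorem comp_eq_zero_symm [FiniteDimensional ℝ n] (hl : l.IsAlt)
    (hj : ∀ z x y, ⟪j z x, y⟫ = ⟪z, l x y⟫) {z z' : n} (h : j z ∘ₗ j z' = 0) :
    j z' ∘ₗ j z = 0 := by
  show j z' * j z = 0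
  simpa [star_apply_eq_neg hl hj] using congrArg star (show j z * j z' = 0 from h)

theorem apply_eq_zero_of_mem (hZ : ∀ x, x ∈ Z ↔ ∀ y, l x y = 0)
    (hj : ∀ z x y, ⟪j z x, y⟫ = ⟪z, l x y⟫) (z : n) {x : n} (hx : x ∈ Z) : j z x = 0 :=
  ext_inner_right ℝ fun y => by rw [hj, (hZ x).1 hx y, inner_zero_right, inner_zero_left]

theorem inner_apply_eq_zero_of_mem (hl : l.IsAlt) (hZ : ∀ x, x ∈ Z ↔ ∀ y, l x y = 0)
    (hj : ∀ z x y, ⟪j z x, y⟫ = ⟪z, l x y⟫) (z u : n) {w : n} (hw : w ∈ Z) :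
    ⟪j z u, w⟫ = 0 := by
  rw [inner_apply_eq_neg_inner hl hj, apply_eq_zero_of_mem hZ hj z hw, inner_zero_right,
    neg_zero]

theorem mem_of_forall_apply_eq_zero (hZ : ∀ x, x ∈ Z ↔ ∀ y, l x y = 0)
    (h2 : ∀ x y, l x y ∈ Z) (hj : ∀ z x y, ⟪j z x, y⟫ = ⟪z, l x y⟫) {x : n}
    (hx : ∀ z ∈ Z, j z x = 0) : x ∈ Z :=
  (hZ x).2 fun y => (inner_self_eq_zero (𝕜 := ℝ)).1 <| by
    rw [← hj, hx _ (h2 x y), inner_zero_left]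

theorem apply_starProjection [Z.HasOrthogonalProjection] (h2 : ∀ x y, l x y ∈ Z)
    (hj : ∀ z x y, ⟪j z x, y⟫ = ⟪z, l x y⟫) (x : n) : j (Z.starProjection x) = j x := by
  ext u
  refine ext_inner_right ℝ fun v => ?_
  rw [hj, hj, eq_comm, ← sub_eq_zero, ← inner_sub_left]
  exact Z.starProjection_inner_eq_zero x _ (h2 u v)

theorem comp_apply_sub_smul_eq_zero [FiniteDimensional ℝ n] (hl : l.IsAlt)
    (hj : ∀ z x y, ⟪j z x, y⟫ = ⟪z, l x y⟫) {B : n →ₗ[ℝ] n} {γ : n →ₗ[ℝ] n →ₗ[ℝ] n}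
    (hγ : γ.IsAlt) (hK : KillingEquation j Z B γ) {z z' : n} (hz : z ∈ Z) (hz' : z' ∈ Z)
    {a : ℝ} (hBz : B z = a • z) : j z ∘ₗ j (B z' - a • z') = 0 := by
  have h₁ := hK z hz z' hz'
  have h₂ := hK z' hz' z hz
  rw [hBz, map_smul] at h₁ h₂
  rw [← hγ.neg, map_neg] at h₂
  rw [map_sub, map_smul]
  exact mul_sub_smul_eq_zero_of_star_eq_neg (star_apply_eq_neg hl hj z)
    (star_apply_eq_neg hl hj z') (star_apply_eq_neg hl hj (B z'))
    (star_apply_eq_neg hl hj (γ z z')) h₁ h₂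

def idealOf (j : n →ₗ[ℝ] n →ₗ[ℝ] n) (W : Submodule ℝ n) : Submodule ℝ n :=
  W ⊔ ⨆ w ∈ W, LinearMap.range (j w)

theorem le_idealOf (W : Submodule ℝ n) : W ≤ idealOf j W := le_sup_left

theorem apply_mem_idealOf {W : Submodule ℝ n} {w : n} (hw : w ∈ W) (u : n) :
    j w u ∈ idealOf j W :=
  Submodule.mem_sup_right <| (le_iSup₂ (f := fun w (_ : w ∈ W) => LinearMap.range (j w)) w hw)
    (LinearMap.mem_range_self _ u)

theorem lie_mem_idealOf (hZ : ∀ x, x ∈ Z ↔ ∀ y, l x y = 0) (h2 : ∀ x y, l x y ∈ Z)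
    (hj : ∀ z x y, ⟪j z x, y⟫ = ⟪z, l x y⟫) {Z₁ Z₂ : Submodule ℝ n} (hsup : Z₁ ⊔ Z₂ = Z)
    (horth : Z₁ ⟂ Z₂) (hcomp : ∀ z₁ ∈ Z₁, ∀ z₂ ∈ Z₂, j z₂ ∘ₗ j z₁ = 0) {x : n}
    (hx : x ∈ idealOf j Z₁) (y : n) : l x y ∈ idealOf j Z₁ := by
  suffices idealOf j Z₁ ≤ (idealOf j Z₁).comap (l.flip y) from this hx
  refine sup_le (fun w hw => ?_) (iSup₂_le fun w hw => ?_)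
  · have hwZ : w ∈ Z := hsup ▸ Submodule.mem_sup_left hw
    simp [(hZ w).1 hwZ y]
  · rintro _ ⟨u, rfl⟩
    refine le_idealOf Z₁ (Submodule.mem_of_mem_sup_of_mem_orthogonal horth
      (hsup ▸ h2 _ y) fun z₂ hz₂ => ?_)
    rw [LinearMap.flip_apply, ← hj, ← LinearMap.comp_apply, hcomp w hw z₂ hz₂,
      LinearMap.zero_apply, inner_zero_left]

theorem idealOf_isOrtho (hl : l.IsAlt) (hZ : ∀ x, x ∈ Z ↔ ∀ y, l x y = 0)
    (hj : ∀ z x y, ⟪j z x, y⟫ = ⟪z, l x y⟫) {Z₁ Z₂ : Submodule ℝ n} (hZ₁ : Z₁ ≤ Z)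
    (hZ₂ : Z₂ ≤ Z) (horth : Z₁ ⟂ Z₂) (hcomp : ∀ z₁ ∈ Z₁, ∀ z₂ ∈ Z₂, j z₂ ∘ₗ j z₁ = 0) :
    idealOf j Z₁ ⟂ idealOf j Z₂ := by
  simp only [idealOf, Submodule.isOrtho_sup_left, Submodule.isOrtho_sup_right,
    Submodule.isOrtho_iSup_left, Submodule.isOrtho_iSup_right]
  refine ⟨⟨horth, fun w₁ hw₁ => ?_⟩, fun w₂ hw₂ => ⟨?_, fun w₁ hw₁ => ?_⟩⟩ <;>
    rw [Submodule.isOrtho_iff_inner_eq]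
  · rintro _ ⟨u, rfl⟩ z₂ hz₂
    exact inner_apply_eq_zero_of_mem hl hZ hj _ _ (hZ₂ hz₂)
  · rintro z₁ hz₁ _ ⟨u, rfl⟩
    rw [real_inner_comm, inner_apply_eq_zero_of_mem hl hZ hj _ _ (hZ₁ hz₁)]
  · rintro _ ⟨u, rfl⟩ _ ⟨v, rfl⟩
    rw [real_inner_comm, inner_apply_eq_neg_inner hl hj, ← LinearMap.comp_apply,
      hcomp w₁ hw₁ w₂ hw₂, LinearMap.zero_apply, inner_zero_right, neg_zero]

theorem idealOf_sup_idealOf [FiniteDimensional ℝ n] (hl : l.IsAlt)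
    (hZ : ∀ x, x ∈ Z ↔ ∀ y, l x y = 0) (h2 : ∀ x y, l x y ∈ Z)
    (hj : ∀ z x y, ⟪j z x, y⟫ = ⟪z, l x y⟫) {Z₁ Z₂ : Submodule ℝ n} (hsup : Z₁ ⊔ Z₂ = Z) :
    idealOf j Z₁ ⊔ idealOf j Z₂ = ⊤ := by
  rw [← Submodule.orthogonal_eq_bot_iff, Submodule.eq_bot_iff]
  intro x hx
  have hjx : ∀ z ∈ Z, j z x = 0 := by
    intro z hz
    obtain ⟨z₁, hz₁, z₂, hz₂, rfl⟩ := Submodule.mem_sup.1 (hsup ▸ hz)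
    refine ext_inner_right ℝ fun u => ?_
    rw [inner_apply_eq_neg_inner hl hj, inner_zero_left, neg_eq_zero, map_add,
      LinearMap.add_apply]
    exact Submodule.inner_left_of_mem_orthogonal (add_mem
      (Submodule.mem_sup_left (apply_mem_idealOf hz₁ u))
      (Submodule.mem_sup_right (apply_mem_idealOf hz₂ u))) hx
  have hZN : Z ≤ idealOf j Z₁ ⊔ idealOf j Z₂ :=
    hsup ▸ sup_le_sup (le_idealOf Z₁) (le_idealOf Z₂)
  exact (inner_self_eq_zero (𝕜 := ℝ)).1 <|
    Submodule.inner_left_of_mem_orthogonal (hZN (mem_of_forall_apply_eq_zero hZ h2 hj hjx)) hx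

theorem eq_bot_or_eq_bot_of_comp_eq_zero [FiniteDimensional ℝ n] (hl : l.IsAlt)
    (hZ : ∀ x, x ∈ Z ↔ ∀ y, l x y = 0) (h2 : ∀ x y, l x y ∈ Z)
    (hj : ∀ z x y, ⟪j z x, y⟫ = ⟪z, l x y⟫) (hirr : IsIrreducible l)
    {Z₁ Z₂ : Submodule ℝ n} (hsup : Z₁ ⊔ Z₂ = Z) (horth : Z₁ ⟂ Z₂)
    (hcomp : ∀ z₁ ∈ Z₁, ∀ z₂ ∈ Z₂, j z₁ ∘ₗ j z₂ = 0) : Z₁ = ⊥ ∨ Z₂ = ⊥ := by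
  have hcomp' : ∀ z₁ ∈ Z₁, ∀ z₂ ∈ Z₂, j z₂ ∘ₗ j z₁ = 0 := fun z₁ h₁ z₂ h₂ =>
    comp_eq_zero_symm hl hj (hcomp z₁ h₁ z₂ h₂)
  have hsup' : Z₂ ⊔ Z₁ = Z := sup_comm Z₂ Z₁ ▸ hsup
  rcases hirr _ _ (fun x hx => lie_mem_idealOf hZ h2 hj hsup horth hcomp' hx)
      (fun x hx => lie_mem_idealOf hZ h2 hj hsup' horth.symm
        (fun z₂ h₂ z₁ h₁ => hcomp z₁ h₁ z₂ h₂) hx)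
      (Submodule.isOrtho_iff_inner_eq.1 (idealOf_isOrtho hl hZ hj (hsup ▸ le_sup_left)
        (hsup ▸ le_sup_right) horth hcomp'))
      (idealOf_sup_idealOf hl hZ h2 hj hsup) with h | h
  · exact Or.inl (eq_bot_iff.2 (h ▸ le_idealOf Z₁))
  · exact Or.inr (eq_bot_iff.2 (h ▸ le_idealOf Z₂))

theorem exists_eq_smul_of_killingEquation [FiniteDimensional ℝ n] (hl : l.IsAlt)
    (hZ : ∀ x, x ∈ Z ↔ ∀ y, l x y = 0) (h2 : ∀ x y, l x y ∈ Z)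
    (hj : ∀ z x y, ⟪j z x, y⟫ = ⟪z, l x y⟫) (hirr : IsIrreducible l) {B : n →ₗ[ℝ] n}
    {γ : n →ₗ[ℝ] n →ₗ[ℝ] n} (hBZ : ∀ z ∈ Z, B z ∈ Z)
    (hBsym : ∀ z ∈ Z, ∀ z' ∈ Z, ⟪B z, z'⟫ = ⟪z, B z'⟫) (hγ : γ.IsAlt)
    (hK : KillingEquation j Z B γ) : ∃ c : ℝ, ∀ z ∈ Z, B z = c • z := by
  rcases eq_or_ne Z ⊥ with rfl | hne
  · exact ⟨0, fun z hz => by rw [(Submodule.mem_bot ℝ).1 hz, map_zero, smul_zero]⟩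
  obtain ⟨a, z₀, hz₀, hz₀ne, hBz₀⟩ := exists_mem_ne_zero_apply_eq_smul hne hBZ hBsym
  set T := B - a • LinearMap.id
  have hTZ : ∀ z ∈ Z, T z ∈ Z := fun z hz => Z.sub_mem (hBZ z hz) (Z.smul_mem a hz)
  have hT : ∀ z ∈ Z, ∀ z' ∈ Z, ⟪T z, z'⟫ = ⟪z, T z'⟫ := by
    intro z hz z' hz'
    simp [T, inner_sub_left, inner_sub_right, real_inner_smul_left, real_inner_smul_right,
      hBsym z hz z' hz']
  have hcomp : ∀ z₁ ∈ Z ⊓ LinearMap.ker T, ∀ z₂ ∈ Z.map T, j z₁ ∘ₗ j z₂ = 0 := by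
    rintro z₁ ⟨hz₁, hTz₁⟩ _ ⟨z', hz', rfl⟩
    exact comp_apply_sub_smul_eq_zero hl hj hγ hK hz₁ hz' (sub_eq_zero.1 hTz₁)
  refine ⟨a, fun z hz => sub_eq_zero.1 ?_⟩
  rcases eq_bot_or_eq_bot_of_comp_eq_zero hl hZ h2 hj hirr (inf_ker_sup_map_eq hTZ hT)
    (inf_ker_isOrtho_map hT) hcomp with h | h
  · exact absurd ((Submodule.mem_bot ℝ).1 (h ▸ ⟨hz₀, sub_eq_zero.2 hBz₀⟩)) hz₀ne
  · exact (Submodule.mem_bot ℝ).1 (h ▸ Submodule.mem_map_of_mem hz)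

theorem exists_apply_eq_smul_bracket_of_killingEquation [FiniteDimensional ℝ n] (hl : l.IsAlt)
    (hZ : ∀ x, x ∈ Z ↔ ∀ y, l x y = 0) (h2 : ∀ x y, l x y ∈ Z)
    (hj : ∀ z x y, ⟪j z x, y⟫ = ⟪z, l x y⟫) (hirr : IsIrreducible l) {B : n →ₗ[ℝ] n}
    {γ : n →ₗ[ℝ] n →ₗ[ℝ] n} (hBZ : ∀ z ∈ Z, B z ∈ Z)
    (hBsym : ∀ z ∈ Z, ∀ z' ∈ Z, ⟪B z, z'⟫ = ⟪z, B z'⟫) (hγ : γ.IsAlt)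
    (hK : KillingEquation j Z B γ) :
    ∃ c : ℝ, (∀ z ∈ Z, B z = c • z) ∧
      ∀ z ∈ Z, ∀ z' ∈ Z, j (γ z z') = (2 * c) • (j z ∘ₗ j z' - j z' ∘ₗ j z) := by
  obtain ⟨c, hc⟩ := exists_eq_smul_of_killingEquation hl hZ h2 hj hirr hBZ hBsym hγ hK
  refine ⟨c, hc, fun z hz z' hz' => ?_⟩
  rw [← hK z hz z' hz', hc z hz, hc z' hz', map_smul, map_smul, LinearMap.smul_comp,
    LinearMap.smul_comp, LinearMap.comp_smul]
  module

theorem injOn (hjinj : ∀ z ∈ Z, j z = 0 → z = 0) : Set.InjOn j Z := fun w hw w' hw' h =>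
  sub_eq_zero.1 <| hjinj _ (Z.sub_mem hw hw') (by rw [map_sub, h, sub_self])

theorem bracketClosed_and_bracketSkew_of_apply_eq_smul (hjinj : ∀ z ∈ Z, j z = 0 → z = 0)
    {γ : n →ₗ[ℝ] n →ₗ[ℝ] n} {c : ℝ} (hc : c ≠ 0) (hγZ : ∀ z ∈ Z, ∀ z' ∈ Z, γ z z' ∈ Z)
    (hγsk : ∀ z ∈ Z, ∀ z' ∈ Z, ∀ z'' ∈ Z, ⟪γ z z', z''⟫ = -⟪γ z z'', z'⟫)
    (hγc : ∀ z ∈ Z, ∀ z' ∈ Z, j (γ z z') = (2 * c) • (j z ∘ₗ j z' - j z' ∘ₗ j z)) :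
    BracketClosed j Z ∧ BracketSkew j Z := by
  have hbr : ∀ z ∈ Z, ∀ z' ∈ Z, j z ∘ₗ j z' - j z' ∘ₗ j z = j ((2 * c)⁻¹ • γ z z') := by
    intro z hz z' hz'
    rw [map_smul, hγc z hz z' hz', smul_smul, inv_mul_cancel₀ (mul_ne_zero two_ne_zero hc),
      one_smul]
  refine ⟨fun z hz z' hz' => ⟨_, Z.smul_mem _ (hγZ z hz z' hz'), hbr z hz z' hz'⟩,
    fun z hz z' hz' z'' hz'' w hw w' hw' hw₁ hw₂ => ?_⟩
  rw [injOn hjinj hw (Z.smul_mem _ (hγZ z hz z' hz')) (hw₁.symm.trans (hbr z hz z' hz')),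
    injOn hjinj hw' (Z.smul_mem _ (hγZ z hz z'' hz'')) (hw₂.symm.trans (hbr z hz z'' hz'')),
    real_inner_smul_left, real_inner_smul_right, real_inner_comm _ z',
    hγsk z hz z' hz' z'' hz'']
  ring

theorem exists_apply_eq_bracket [FiniteDimensional ℝ n] (h2 : ∀ x y, l x y ∈ Z)
    (hj : ∀ z x y, ⟪j z x, y⟫ = ⟪z, l x y⟫) (hjinj : ∀ z ∈ Z, j z = 0 → z = 0)
    (h1 : BracketClosed j Z) :
    ∃ γ₀ : n →ₗ[ℝ] n →ₗ[ℝ] n,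
      (∀ x y, γ₀ x y ∈ Z) ∧ ∀ x y, j (γ₀ x y) = j x ∘ₗ j y - j y ∘ₗ j x := by
  let jZ := j ∘ₗ Z.subtype
  have hinj : Function.Injective jZ :=
    (injective_iff_map_eq_zero jZ).2 fun u hu => Subtype.ext (hjinj u u.2 hu)
  let M := (LinearMap.mul ℝ (Module.End ℝ n)).compl₁₂ j j
  -- `j` only sees the `Z`-component of its argument, so `h1` applies to arbitrary `x`, `y`.
  have hbr : ∀ x y, (M - M.flip) x y ∈ LinearMap.range jZ := by
    intro x y
    obtain ⟨w, hw, hw'⟩ :=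
      h1 _ (Z.starProjection_apply_mem x) _ (Z.starProjection_apply_mem y)
    refine ⟨⟨w, hw⟩, ?_⟩
    simp only [jZ, M, LinearMap.comp_apply, Submodule.subtype_apply, LinearMap.sub_apply,
      LinearMap.flip_apply, LinearMap.compl₁₂_apply, LinearMap.mul_apply']
    rw [← hw', apply_starProjection h2 hj, apply_starProjection h2 hj]
    rfl
  refine ⟨(LinearMap.codRestrict₂ (M - M.flip) jZ hinj hbr).compr₂ Z.subtype,
    fun x y => Submodule.coe_mem _, fun x y => ?_⟩
  exact LinearMap.codRestrict₂_apply (M - M.flip) jZ hinj hbr x y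

theorem exists_killingEquation_id [FiniteDimensional ℝ n] (h2 : ∀ x y, l x y ∈ Z)
    (hj : ∀ z x y, ⟪j z x, y⟫ = ⟪z, l x y⟫) (hjinj : ∀ z ∈ Z, j z = 0 → z = 0)
    (h1 : BracketClosed j Z) (hskew : BracketSkew j Z) :
    ∃ γ : n →ₗ[ℝ] n →ₗ[ℝ] n, (∀ z ∈ Z, ∀ z' ∈ Z, γ z z' ∈ Z) ∧ γ.IsAlt ∧
      (∀ z ∈ Z, ∀ z' ∈ Z, ∀ z'' ∈ Z, ⟪γ z z', z''⟫ = -⟪γ z z'', z'⟫) ∧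
      KillingEquation j Z LinearMap.id γ := by
  obtain ⟨γ₀, hγ₀Z, hγ₀⟩ := exists_apply_eq_bracket h2 hj hjinj h1
  refine ⟨(2 : ℝ) • γ₀, fun z _ z' _ => Z.smul_mem _ (hγ₀Z z z'), fun x => ?_,
    fun z hz z' hz' z'' hz'' => ?_, fun z _ z' _ => ?_⟩
  · have : γ₀ x x = 0 := injOn hjinj (hγ₀Z x x) Z.zero_mem (by rw [hγ₀, sub_self, map_zero])
    simp [this]
  · have := hskew z hz z' hz' z'' hz'' _ (hγ₀Z z z') _ (hγ₀Z z z'') (hγ₀ z z').symm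
      (hγ₀ z z'').symm
    rw [real_inner_comm _ z'] at this
    simp only [LinearMap.smul_apply, real_inner_smul_left]
    linarith
  · simp only [LinearMap.id_apply, LinearMap.smul_apply, map_smul, hγ₀]
    module

end TwoStepNilpotent

/-- An irreducible 2-step nilpotent metric Lie algebra `n` admits a non-zero
Killing 3-form (i.e. a pair `α = j∘B + γ` with `B` symmetric on `z`, `γ ∈ Λ³z*`, satisfying
`j(Bz) j(z') − j(Bz') j(z) + [j(z), j(Bz')] = j(γ(z,z'))`) if and only if
(1) `j(z)` is a Lie subalgebra of `so(v)` and (2) for each `z ∈ z` the map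
`z' ↦ j⁻¹[j z, j z']` lies in `so(z)`.  In this case the space of Killing 3-forms is
one-dimensional, spanned by `j + γ₀` with `γ₀(z,z') = 2 j⁻¹[j z, j z']`. -/
theorem killing_stmt17 {n : Type*} [NormedAddCommGroup n] [InnerProductSpace ℝ n]
    [FiniteDimensional ℝ n]
    (l : n →ₗ[ℝ] n →ₗ[ℝ] n) (hanti : ∀ x : n, l x x = 0)
    (Z : Submodule ℝ n) (hZ : ∀ x : n, x ∈ Z ↔ ∀ y : n, l x y = 0)
    (h2 : ∀ x y : n, l x y ∈ Z) (hna : ∃ x : n, ∃ y : n, l x y ≠ 0)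
    (j : n → n →ₗ[ℝ] n) (hj : ∀ z x y : n, ⟪j z x, y⟫ = ⟪z, l x y⟫)
    (hjinj : ∀ z ∈ Z, j z = 0 → z = 0)
    (hirr : ∀ N' N'' : Submodule ℝ n,
      (∀ x ∈ N', ∀ y : n, l x y ∈ N') → (∀ x ∈ N'', ∀ y : n, l x y ∈ N'') →
      (∀ x ∈ N', ∀ y ∈ N'', ⟪x, y⟫ = 0) → N' ⊔ N'' = ⊤ → N' = ⊥ ∨ N'' = ⊥) :
    -- existence of a non-zero Killing 3-form ↔ conditions (1) and (2)
    ((∃ (B : n →ₗ[ℝ] n) (γ : n →ₗ[ℝ] n →ₗ[ℝ] n),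
        (∀ z ∈ Z, B z ∈ Z) ∧ (∀ z ∈ Z, ∀ z' ∈ Z, ⟪B z, z'⟫ = ⟪z, B z'⟫) ∧
        (∀ z ∈ Z, ∀ z' ∈ Z, γ z z' ∈ Z) ∧ (∀ z : n, γ z z = 0) ∧
        (∀ z ∈ Z, ∀ z' ∈ Z, ∀ z'' ∈ Z, ⟪γ z z', z''⟫ = -⟪γ z z'', z'⟫) ∧
        (∀ z ∈ Z, ∀ z' ∈ Z,
          (j (B z)) ∘ₗ (j z') - (j (B z')) ∘ₗ (j z) +
            ((j z) ∘ₗ (j (B z')) - (j (B z')) ∘ₗ (j z)) = j (γ z z')) ∧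
        ¬((∀ z ∈ Z, B z = 0) ∧ (∀ z ∈ Z, ∀ z' ∈ Z, γ z z' = 0))) ↔
      ((∀ z ∈ Z, ∀ z' ∈ Z, ∃ w ∈ Z, (j z) ∘ₗ (j z') - (j z') ∘ₗ (j z) = j w) ∧
        (∀ z ∈ Z, ∀ z' ∈ Z, ∀ z'' ∈ Z, ∀ w ∈ Z, ∀ w' ∈ Z,
          ((j z) ∘ₗ (j z') - (j z') ∘ₗ (j z) = j w) →
          ((j z) ∘ₗ (j z'') - (j z'') ∘ₗ (j z) = j w') →
          ⟪w, z''⟫ + ⟪z', w'⟫ = 0))) ∧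
    -- in this case the space of Killing 3-forms is one-dimensional, spanned by j + γ₀
    ((∀ z ∈ Z, ∀ z' ∈ Z, ∃ w ∈ Z, (j z) ∘ₗ (j z') - (j z') ∘ₗ (j z) = j w) →
      (∀ z ∈ Z, ∀ z' ∈ Z, ∀ z'' ∈ Z, ∀ w ∈ Z, ∀ w' ∈ Z,
        ((j z) ∘ₗ (j z') - (j z') ∘ₗ (j z) = j w) →
        ((j z) ∘ₗ (j z'') - (j z'') ∘ₗ (j z) = j w') →
        ⟪w, z''⟫ + ⟪z', w'⟫ = 0) →
      ∀ (B : n →ₗ[ℝ] n) (γ : n →ₗ[ℝ] n →ₗ[ℝ] n),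
        (∀ z ∈ Z, B z ∈ Z) → (∀ z ∈ Z, ∀ z' ∈ Z, ⟪B z, z'⟫ = ⟪z, B z'⟫) →
        (∀ z ∈ Z, ∀ z' ∈ Z, γ z z' ∈ Z) → (∀ z : n, γ z z = 0) →
        (∀ z ∈ Z, ∀ z' ∈ Z, ∀ z'' ∈ Z, ⟪γ z z', z''⟫ = -⟪γ z z'', z'⟫) →
        (∀ z ∈ Z, ∀ z' ∈ Z,
          (j (B z)) ∘ₗ (j z') - (j (B z')) ∘ₗ (j z) +
            ((j z) ∘ₗ (j (B z')) - (j (B z')) ∘ₗ (j z)) = j (γ z z')) →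
        ∃ c : ℝ, (∀ z ∈ Z, B z = c • z) ∧
          (∀ z ∈ Z, ∀ z' ∈ Z,
            j (γ z z') = (2 * c) • ((j z) ∘ₗ (j z') - (j z') ∘ₗ (j z)))) := by
  obtain ⟨j, rfl⟩ := TwoStepNilpotent.exists_linearMap_coe_eq hj
  refine ⟨⟨?_, ?_⟩, fun _ _ B γ hBZ hBsym _ hγ _ hK =>
    TwoStepNilpotent.exists_apply_eq_smul_bracket_of_killingEquation hanti hZ h2 hj hirr
      hBZ hBsym hγ hK⟩
  · rintro ⟨B, γ, hBZ, hBsym, hγZ, hγ, hγsk, hK, hne⟩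
    obtain ⟨c, hBc, hγc⟩ :=
      TwoStepNilpotent.exists_apply_eq_smul_bracket_of_killingEquation hanti hZ h2 hj hirr
        hBZ hBsym hγ hK
    have hc : c ≠ 0 := by
      rintro rfl
      refine hne ⟨fun z hz => by rw [hBc z hz, zero_smul],
        fun z hz z' hz' => hjinj _ (hγZ z hz z' hz') ?_⟩
      rw [hγc z hz z' hz', mul_zero, zero_smul]
    exact TwoStepNilpotent.bracketClosed_and_bracketSkew_of_apply_eq_smul hjinj hc hγZ hγsk hγc
  · rintro ⟨h1, hskew⟩
    obtain ⟨γ, hγZ, hγ, hγsk, hK⟩ :=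
      TwoStepNilpotent.exists_killingEquation_id h2 hj hjinj h1 hskew
    obtain ⟨x, y, hxy⟩ := hna
    exact ⟨LinearMap.id, γ, fun z hz => hz, fun _ _ _ _ => rfl, hγZ, hγ, hγsk, hK,
      fun ⟨hB, _⟩ => hxy (hB _ (h2 x y))⟩
end

section
/- If (n,g) is a 2-step nilpotent metric Lie algebra with injective j satisfying the naturally reductive conditions (j(z) is a subalgebra of so(v) and z' ↦ j⁻¹[j(z),j(z')] is skew for each z), then the bracket [[z,z']] := j⁻¹([j(z), j(z')]) makes z into a Lie algebra whose inner product is invariant: g([[z,z']],z'') + g(z',[[z,z'']]) = 0, so (z, [[·,·]]) is a compact (metric) Lie algebra and j is a faithful representation. -/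
/-!
Because `⟪j z x, y⟫ = ⟪z, l x y⟫` is additive in `z`, so is `j`; together with injectivity of `j`
on `Z`, every additive identity among commutators of the operators `j z` pulls back to `Z`.
Antisymmetry and the Jacobi identity of `[[·,·]]` are thus those of the commutator bracket of
`Module.End ℝ n`, and invariance of the inner product is the skew-symmetry condition itself.
-/

open scoped RealInnerProductSpace

attribute [local instance] LieRing.ofAssociativeRing

theorem Module.End.comp_sub_comp_eq_lie {R M : Type*} [Semiring R] [AddCommGroup M] [Module R M]
    (A B : Module.End R M) : A ∘ₗ B - B ∘ₗ A = ⁅A, B⁆ :=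
  (Ring.lie_def A B).symm

theorem map_add_of_inner_apply_eq {E F G : Type*} [NormedAddCommGroup E] [InnerProductSpace ℝ E]
    [AddCommMonoid F] [Module ℝ F] [NormedAddCommGroup G] [InnerProductSpace ℝ G]
    {j : E → F →ₗ[ℝ] G} {l : F → G → E} (hj : ∀ z x y, ⟪j z x, y⟫ = ⟪z, l x y⟫) (a b : E) :
    j (a + b) = j a + j b := by
  ext x
  refine ext_inner_right ℝ fun y => ?_
  simp only [LinearMap.add_apply, inner_add_left, hj]

theorem killing_stmt18_general {n : Type*} [NormedAddCommGroup n] [InnerProductSpace ℝ n]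
    (l : n →ₗ[ℝ] n →ₗ[ℝ] n)
    (Z : Submodule ℝ n)
    (j : n → n →ₗ[ℝ] n) (hj : ∀ z x y : n, ⟪j z x, y⟫ = ⟪z, l x y⟫)
    (hjinj : ∀ z ∈ Z, j z = 0 → z = 0)
    -- naturally reductive condition (2): z' ↦ j⁻¹[j z, j z'] is skew-symmetric
    (hskew : ∀ z ∈ Z, ∀ z' ∈ Z, ∀ z'' ∈ Z, ∀ w ∈ Z, ∀ w' ∈ Z,
      ((j z) ∘ₗ (j z') - (j z') ∘ₗ (j z) = j w) →
      ((j z) ∘ₗ (j z'') - (j z'') ∘ₗ (j z) = j w') →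
      ⟪w, z''⟫ + ⟪z', w'⟫ = 0) :
    -- the bracket [[·,·]] is antisymmetric
    (∀ z ∈ Z, ∀ z' ∈ Z, ∀ w ∈ Z, ∀ w' ∈ Z,
      ((j z) ∘ₗ (j z') - (j z') ∘ₗ (j z) = j w) →
      ((j z') ∘ₗ (j z) - (j z) ∘ₗ (j z') = j w') →
      w' = -w) ∧
    -- the bracket [[·,·]] satisfies the Jacobi identity
    (∀ z1 ∈ Z, ∀ z2 ∈ Z, ∀ z3 ∈ Z, ∀ w12 ∈ Z, ∀ w23 ∈ Z, ∀ w31 ∈ Z,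
      ∀ u1 ∈ Z, ∀ u2 ∈ Z, ∀ u3 ∈ Z,
      ((j z1) ∘ₗ (j z2) - (j z2) ∘ₗ (j z1) = j w12) →
      ((j z2) ∘ₗ (j z3) - (j z3) ∘ₗ (j z2) = j w23) →
      ((j z3) ∘ₗ (j z1) - (j z1) ∘ₗ (j z3) = j w31) →
      ((j z1) ∘ₗ (j w23) - (j w23) ∘ₗ (j z1) = j u1) →
      ((j z2) ∘ₗ (j w31) - (j w31) ∘ₗ (j z2) = j u2) →
      ((j z3) ∘ₗ (j w12) - (j w12) ∘ₗ (j z3) = j u3) →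
      u1 + u2 + u3 = 0) ∧
    -- the inner product on z is invariant under the bracket [[·,·]]
    (∀ z ∈ Z, ∀ z' ∈ Z, ∀ z'' ∈ Z, ∀ w ∈ Z, ∀ w' ∈ Z,
      ((j z) ∘ₗ (j z') - (j z') ∘ₗ (j z) = j w) →
      ((j z) ∘ₗ (j z'') - (j z'') ∘ₗ (j z) = j w') →
      ⟪w, z''⟫ + ⟪z', w'⟫ = 0) := by
  have hadd := map_add_of_inner_apply_eq hj
  simp only [Module.End.comp_sub_comp_eq_lie] at hskew ⊢
  refine ⟨?_, ?_, hskew⟩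
  · intro z _ z' _ w hw w' hw' hw_eq hw'_eq
    refine eq_neg_of_add_eq_zero_left (hjinj _ (Z.add_mem hw' hw) ?_)
    rw [hadd, ← hw_eq, ← hw'_eq, ← lie_skew, neg_add_cancel]
  · intro z1 _ z2 _ z3 _ w12 _ w23 _ w31 _ u1 hu1 u2 hu2 u3 hu3 e12 e23 e31 f1 f2 f3
    refine hjinj _ (Z.add_mem (Z.add_mem hu1 hu2) hu3) ?_
    rw [hadd, hadd, ← f1, ← f2, ← f3, ← e12, ← e23, ← e31]
    exact lie_jacobi (j z1) (j z2) (j z3)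

/-- If `(n,g)` is a 2-step nilpotent metric Lie algebra with injective `j`
satisfying the naturally reductive conditions, then `[[z,z']] := j⁻¹[j z, j z']` makes `z`
into a Lie algebra (antisymmetric bracket satisfying the Jacobi identity) whose inner product
is ad-invariant: `g([[z,z']],z'') + g(z',[[z,z'']]) = 0`; thus `(z, [[·,·]])` is a compact
metric Lie algebra and `j` is a faithful representation.  The bracket is expressed through
witnesses: `w = [[z,z']]` means `j z ∘ j z' − j z' ∘ j z = j w` with `w ∈ z`. -/
theorem killing_stmt18 {n : Type*} [NormedAddCommGroup n] [InnerProductSpace ℝ n]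
    [FiniteDimensional ℝ n]
    (l : n →ₗ[ℝ] n →ₗ[ℝ] n) (hanti : ∀ x : n, l x x = 0)
    (Z : Submodule ℝ n) (hZ : ∀ x : n, x ∈ Z ↔ ∀ y : n, l x y = 0)
    (h2 : ∀ x y : n, l x y ∈ Z) (hna : ∃ x : n, ∃ y : n, l x y ≠ 0)
    (j : n → n →ₗ[ℝ] n) (hj : ∀ z x y : n, ⟪j z x, y⟫ = ⟪z, l x y⟫)
    (hjinj : ∀ z ∈ Z, j z = 0 → z = 0)
    -- naturally reductive condition (1): j(z) is a subalgebra of so(v)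
    (hsub : ∀ z ∈ Z, ∀ z' ∈ Z, ∃ w ∈ Z, (j z) ∘ₗ (j z') - (j z') ∘ₗ (j z) = j w)
    -- naturally reductive condition (2): z' ↦ j⁻¹[j z, j z'] is skew-symmetric
    (hskew : ∀ z ∈ Z, ∀ z' ∈ Z, ∀ z'' ∈ Z, ∀ w ∈ Z, ∀ w' ∈ Z,
      ((j z) ∘ₗ (j z') - (j z') ∘ₗ (j z) = j w) →
      ((j z) ∘ₗ (j z'') - (j z'') ∘ₗ (j z) = j w') →
      ⟪w, z''⟫ + ⟪z', w'⟫ = 0) :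
    -- the bracket [[·,·]] is antisymmetric
    (∀ z ∈ Z, ∀ z' ∈ Z, ∀ w ∈ Z, ∀ w' ∈ Z,
      ((j z) ∘ₗ (j z') - (j z') ∘ₗ (j z) = j w) →
      ((j z') ∘ₗ (j z) - (j z) ∘ₗ (j z') = j w') →
      w' = -w) ∧
    -- the bracket [[·,·]] satisfies the Jacobi identity
    (∀ z1 ∈ Z, ∀ z2 ∈ Z, ∀ z3 ∈ Z, ∀ w12 ∈ Z, ∀ w23 ∈ Z, ∀ w31 ∈ Z,
      ∀ u1 ∈ Z, ∀ u2 ∈ Z, ∀ u3 ∈ Z,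
      ((j z1) ∘ₗ (j z2) - (j z2) ∘ₗ (j z1) = j w12) →
      ((j z2) ∘ₗ (j z3) - (j z3) ∘ₗ (j z2) = j w23) →
      ((j z3) ∘ₗ (j z1) - (j z1) ∘ₗ (j z3) = j w31) →
      ((j z1) ∘ₗ (j w23) - (j w23) ∘ₗ (j z1) = j u1) →
      ((j z2) ∘ₗ (j w31) - (j w31) ∘ₗ (j z2) = j u2) →
      ((j z3) ∘ₗ (j w12) - (j w12) ∘ₗ (j z3) = j u3) →
      u1 + u2 + u3 = 0) ∧
    -- the inner product on z is invariant under the bracket [[·,·]]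
    (∀ z ∈ Z, ∀ z' ∈ Z, ∀ z'' ∈ Z, ∀ w ∈ Z, ∀ w' ∈ Z,
      ((j z) ∘ₗ (j z') - (j z') ∘ₗ (j z) = j w) →
      ((j z) ∘ₗ (j z'') - (j z'') ∘ₗ (j z) = j w') →
      ⟪w, z''⟫ + ⟪z', w'⟫ = 0) :=
  killing_stmt18_general l Z j hj hjinj hskew
end

section
/- A de Rham irreducible 2-step nilpotent Riemannian Lie group cannot simultaneously admit a non-zero Killing 2-form and a non-zero Killing 3-form. At the Lie algebra level: if (n,g) is an irreducible 2-step nilpotent metric Lie algebra with injective j admitting an orthogonal bi-invariant complex structure J, then j(z) cannot be a Lie subalgebra of so(v) satisfying the naturally reductive condition (indeed, J anti-commutes with every j(z), forcing j(z) abelian, and then 0 = [j(z), j(Jz)] = −2 j(z)² J forces j = 0, a contradiction). -/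
/-!
Bi-invariance and orthogonality of `J` make every `j z` anticommute with `J`, and give
`j (J z) = J ∘ j z`. A commutator of two maps anticommuting with `J` commutes with `J`; when it
is itself some `j w` it also anticommutes with `J`, so it vanishes: the maps `j z`, `z ∈ Z`,
commute pairwise. Applied to `z` and `J z` this gives `J ∘ (j z)² = -J ∘ (j z)²`, so
`(j z)² = 0`, and a skew-adjoint map with zero square is zero. Injectivity of `j` then kills the
centre, which contains the (nonzero) derived algebra.
-/

open scoped RealInnerProductSpace

namespace LinearMap

variable {R M : Type*} [Semiring R] [AddCommGroup M] [Module R M] {J : M →ₗ[R] M}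

theorem commutator_comp_of_anticommute {A B : M →ₗ[R] M}
    (hA : A ∘ₗ J = -(J ∘ₗ A)) (hB : B ∘ₗ J = -(J ∘ₗ B)) :
    (A ∘ₗ B - B ∘ₗ A) ∘ₗ J = J ∘ₗ (A ∘ₗ B - B ∘ₗ A) := by
  have hA' (x : M) : A (J x) = -J (A x) := congr($hA x)
  have hB' (x : M) : B (J x) = -J (B x) := congr($hB x)
  ext x
  simp [hA', hB', sub_eq_add_neg]

theorem eq_zero_of_comp_eq_neg [IsAddTorsionFree M] (hJ : J ∘ₗ J = -id) {T : M →ₗ[R] M}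
    (h : J ∘ₗ T = -(J ∘ₗ T)) : T = 0 := by
  ext x
  have hJT : J (T x) = 0 := self_eq_neg.mp (congr($h x))
  simpa [hJT] using congr($hJ (T x))

theorem comp_self_eq_zero_of_commute_comp [IsAddTorsionFree M] (hJ : J ∘ₗ J = -id)
    {A : M →ₗ[R] M} (hA : A ∘ₗ J = -(J ∘ₗ A)) (hcomm : A ∘ₗ (J ∘ₗ A) = (J ∘ₗ A) ∘ₗ A) :
    A ∘ₗ A = 0 := by
  refine eq_zero_of_comp_eq_neg hJ ?_
  calc J ∘ₗ (A ∘ₗ A) = A ∘ₗ (J ∘ₗ A) := by rw [hcomm, comp_assoc]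
    _ = -(J ∘ₗ (A ∘ₗ A)) := by rw [← comp_assoc, hA, neg_comp, comp_assoc]

theorem IsAlt.map_apply_right {R M : Type*} [CommSemiring R] [AddCommGroup M] [Module R M]
    {J : M →ₗ[R] M} {l : M →ₗ[R] M →ₗ[R] M} (hl : l.IsAlt)
    (hJl : ∀ x y, J (l x y) = l (J x) y) (x y : M) : J (l x y) = l x (J y) := by
  rw [← hl.neg (J y), ← hJl, ← map_neg, hl.neg]

end LinearMap

section InnerProductSpace

variable {E : Type*} [NormedAddCommGroup E] [InnerProductSpace ℝ E]

theorem inner_map_left_eq_neg_inner_map_right {J : E →ₗ[ℝ] E} (hJ : J ∘ₗ J = -LinearMap.id)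
    (hJorth : ∀ a b : E, ⟪J a, J b⟫ = ⟪a, b⟫) (a b : E) : ⟪J a, b⟫ = -⟪a, J b⟫ := by
  have hJJ : J (J b) = -b := by simpa using congr($hJ b)
  rw [← hJorth a (J b), hJJ, inner_neg_right, neg_neg]

theorem LinearMap.eq_zero_of_inner_map_skew_of_comp_self_eq_zero {T : E →ₗ[ℝ] E}
    (hT : ∀ x y : E, ⟪T x, y⟫ = -⟪x, T y⟫) (hT2 : T ∘ₗ T = 0) : T = 0 := by
  ext x
  have h : ⟪T x, T x⟫ = 0 := by
    rw [hT, ← comp_apply, hT2, zero_apply, inner_zero_right, neg_zero]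
  simpa using h

variable {l : E →ₗ[ℝ] E →ₗ[ℝ] E} {j : E → E →ₗ[ℝ] E} {J : E →ₗ[ℝ] E}

theorem inner_jMap_apply_left (hl : l.IsAlt) (hj : ∀ z x y : E, ⟪j z x, y⟫ = ⟪z, l x y⟫)
    (z x y : E) : ⟪j z x, y⟫ = -⟪x, j z y⟫ := by
  rw [hj, ← hl.neg, inner_neg_right, ← hj, real_inner_comm]

theorem jMap_comp_eq_neg_comp (hl : l.IsAlt) (hJ : J ∘ₗ J = -LinearMap.id)
    (hJl : ∀ x y, J (l x y) = l (J x) y) (hJorth : ∀ a b : E, ⟪J a, J b⟫ = ⟪a, b⟫)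
    (hj : ∀ z x y : E, ⟪j z x, y⟫ = ⟪z, l x y⟫) (z : E) : j z ∘ₗ J = -(J ∘ₗ j z) := by
  ext x
  refine ext_inner_right ℝ fun y => ?_
  rw [LinearMap.comp_apply, LinearMap.neg_apply, LinearMap.comp_apply, inner_neg_left,
    inner_map_left_eq_neg_inner_map_right hJ hJorth, neg_neg, hj, hj, ← hJl,
    hl.map_apply_right hJl]

theorem comp_jMap_eq_jMap_apply (hl : l.IsAlt) (hJ : J ∘ₗ J = -LinearMap.id)
    (hJl : ∀ x y, J (l x y) = l (J x) y) (hJorth : ∀ a b : E, ⟪J a, J b⟫ = ⟪a, b⟫)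
    (hj : ∀ z x y : E, ⟪j z x, y⟫ = ⟪z, l x y⟫) (z : E) : J ∘ₗ j z = j (J z) := by
  ext x
  refine ext_inner_right ℝ fun y => ?_
  rw [LinearMap.comp_apply, inner_map_left_eq_neg_inner_map_right hJ hJorth, hj, hj,
    ← hl.map_apply_right hJl, ← inner_map_left_eq_neg_inner_map_right hJ hJorth]

end InnerProductSpace

theorem killing_stmt19_general {n : Type*} [NormedAddCommGroup n] [InnerProductSpace ℝ n]
    (l : n →ₗ[ℝ] n →ₗ[ℝ] n) (hanti : ∀ x : n, l x x = 0)
    (Z : Submodule ℝ n) (hZ : ∀ x : n, x ∈ Z ↔ ∀ y : n, l x y = 0)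
    (h2 : ∀ x y : n, l x y ∈ Z) (hna : ∃ x : n, ∃ y : n, l x y ≠ 0)
    (j : n → n →ₗ[ℝ] n) (hj : ∀ z x y : n, ⟪j z x, y⟫ = ⟪z, l x y⟫)
    (hjinj : ∀ z ∈ Z, j z = 0 → z = 0)
    -- J is an orthogonal bi-invariant complex structure
    (J : n →ₗ[ℝ] n) (hJ2 : J ∘ₗ J = -LinearMap.id)
    (hJbi : ∀ x y : n, J (l x y) = l (J x) y)
    (hJorth : ∀ a b : n, ⟪J a, J b⟫ = ⟪a, b⟫) :
    -- the naturally reductive condition fails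
    ¬((∀ z ∈ Z, ∀ z' ∈ Z, ∃ w ∈ Z, (j z) ∘ₗ (j z') - (j z') ∘ₗ (j z) = j w) ∧
      (∀ z ∈ Z, ∀ z' ∈ Z, ∀ z'' ∈ Z, ∀ w ∈ Z, ∀ w' ∈ Z,
        ((j z) ∘ₗ (j z') - (j z') ∘ₗ (j z) = j w) →
        ((j z) ∘ₗ (j z'') - (j z'') ∘ₗ (j z) = j w') →
        ⟪w, z''⟫ + ⟪z', w'⟫ = 0)) := by
  rintro ⟨hbracket, -⟩
  have : IsAddTorsionFree n := .of_isTorsionFree ℝ n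
  have hjJ : ∀ z, j z ∘ₗ J = -(J ∘ₗ j z) := jMap_comp_eq_neg_comp hanti hJ2 hJbi hJorth hj
  have hcomm : ∀ z ∈ Z, ∀ z' ∈ Z, j z ∘ₗ j z' = j z' ∘ₗ j z := by
    intro z hz z' hz'
    obtain ⟨w, -, hw⟩ := hbracket z hz z' hz'
    refine sub_eq_zero.mp (LinearMap.eq_zero_of_comp_eq_neg hJ2 ?_)
    calc J ∘ₗ _ = j w ∘ₗ J := by
          rw [← hw, LinearMap.commutator_comp_of_anticommute (hjJ z) (hjJ z')]
      _ = _ := by rw [hjJ w, hw]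
  have hJZ : ∀ z ∈ Z, J z ∈ Z := fun z hz =>
    (hZ _).2 fun y => by rw [← hJbi, (hZ z).1 hz y, map_zero]
  have hj0 : ∀ z ∈ Z, j z = 0 := by
    intro z hz
    refine LinearMap.eq_zero_of_inner_map_skew_of_comp_self_eq_zero
      (inner_jMap_apply_left hanti hj z)
      (LinearMap.comp_self_eq_zero_of_commute_comp hJ2 (hjJ z) ?_)
    rw [comp_jMap_eq_jMap_apply hanti hJ2 hJbi hJorth hj]
    exact hcomm z hz (J z) (hJZ z hz)
  obtain ⟨x, y, hxy⟩ := hna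
  exact hxy (hjinj _ (h2 x y) (hj0 _ (h2 x y)))

/-- A de Rham irreducible 2-step nilpotent Riemannian Lie group cannot
simultaneously admit a non-zero Killing 2-form and a non-zero Killing 3-form.  At the Lie
algebra level: if `(n,g)` is an irreducible 2-step nilpotent metric Lie algebra with injective
`j` admitting an orthogonal bi-invariant complex structure `J`, then `j(z)` cannot be a Lie
subalgebra of `so(v)` satisfying the naturally reductive condition. -/
theorem killing_stmt19 {n : Type*} [NormedAddCommGroup n] [InnerProductSpace ℝ n]
    [FiniteDimensional ℝ n]
    (l : n →ₗ[ℝ] n →ₗ[ℝ] n) (hanti : ∀ x : n, l x x = 0)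
    (Z : Submodule ℝ n) (hZ : ∀ x : n, x ∈ Z ↔ ∀ y : n, l x y = 0)
    (h2 : ∀ x y : n, l x y ∈ Z) (hna : ∃ x : n, ∃ y : n, l x y ≠ 0)
    (j : n → n →ₗ[ℝ] n) (hj : ∀ z x y : n, ⟪j z x, y⟫ = ⟪z, l x y⟫)
    (hjinj : ∀ z ∈ Z, j z = 0 → z = 0)
    (hirr : ∀ N' N'' : Submodule ℝ n,
      (∀ x ∈ N', ∀ y : n, l x y ∈ N') → (∀ x ∈ N'', ∀ y : n, l x y ∈ N'') →
      (∀ x ∈ N', ∀ y ∈ N'', ⟪x, y⟫ = 0) → N' ⊔ N'' = ⊤ → N' = ⊥ ∨ N'' = ⊥)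
    -- J is an orthogonal bi-invariant complex structure
    (J : n →ₗ[ℝ] n) (hJ2 : J ∘ₗ J = -LinearMap.id)
    (hJbi : ∀ x y : n, J (l x y) = l (J x) y)
    (hJorth : ∀ a b : n, ⟪J a, J b⟫ = ⟪a, b⟫) :
    -- the naturally reductive condition fails
    ¬((∀ z ∈ Z, ∀ z' ∈ Z, ∃ w ∈ Z, (j z) ∘ₗ (j z') - (j z') ∘ₗ (j z) = j w) ∧
      (∀ z ∈ Z, ∀ z' ∈ Z, ∀ z'' ∈ Z, ∀ w ∈ Z, ∀ w' ∈ Z,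
        ((j z) ∘ₗ (j z') - (j z') ∘ₗ (j z) = j w) →
        ((j z) ∘ₗ (j z'') - (j z'') ∘ₗ (j z) = j w') →
        ⟪w, z''⟫ + ⟪z', w'⟫ = 0)) :=
  killing_stmt19_general l hanti Z hZ h2 hna j hj hjinj J hJ2 hJbi hJorth
end
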